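/- For finite partial orders P1 and P2 (nonempty), the product order P1 × P2 is a Boolean lattice if and only if both P1 and P2 are Boolean lattices. -/

import Mathlib

/-- A finite partial order is a Boolean lattice if it is order-isomorphic to the
powerset lattice (`Finset (Fin n)`, ordered by inclusion) of some finite set. -/
def IsBooleanLattice (P : Type*) [PartialOrder P] : Prop :=
  ∃ n : ℕ, Nonempty (P ≃o Finset (Fin n))

/-!
The powerset of a disjoint union is the product of the powersets, which gives one direction.
Conversely, if `α × β ≃o Finset ι`, then `α × β` has a least and a greatest element, so `α`
is isomorphic to the principal ideal below `(⊤, ⊥)`, and a principal ideal `Set.Iic s` of a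
powerset lattice is again a powerset lattice, that of `s`.
-/

def Equiv.finsetCongrOrderIso {α β : Type*} (e : α ≃ β) : Finset α ≃o Finset β :=
  { e.finsetCongr with map_rel_iff' := Finset.map_subset_map }

def OrderIso.prodCongr {α β γ δ : Type*} [Preorder α] [Preorder β] [Preorder γ] [Preorder δ]
    (e₁ : α ≃o β) (e₂ : γ ≃o δ) : α × γ ≃o β × δ :=
  { e₁.toEquiv.prodCongr e₂.toEquiv with
    map_rel_iff' := by simp [Prod.le_def] }

def Finset.subtypeOrderIsoIic {α : Type*} [DecidableEq α] (s : Finset α) :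
    Finset s ≃o Set.Iic s where
  toFun u := ⟨u.map (Function.Embedding.subtype _), fun _ ↦ by simp +contextual⟩
  invFun t := t.1.subtype (· ∈ s)
  left_inv u := by ext; simp
  right_inv t := Subtype.ext (Finset.subtype_map_of_mem t.2)
  map_rel_iff' := Subtype.mk_le_mk.trans Finset.map_subset_map

/-- As `b` is least in `β`, everything below `(t, b)` lies in the slice `α × {b}`. -/
def OrderIso.fstOrderIsoIic {α β γ : Type*} [Preorder α] [PartialOrder β] [Preorder γ]
    (e : α × β ≃o γ) {t : α} {b : β} (ht : IsTop t) (hb : IsBot b) :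
    α ≃o Set.Iic (e (t, b)) where
  toFun x := ⟨e (x, b), e.le_iff_le.2 ⟨ht x, le_rfl⟩⟩
  invFun s := (e.symm s).1
  left_inv x := by simp
  right_inv s := by
    have hs : e.symm s ≤ (t, b) := e.symm_apply_le.2 s.2
    have h2 : (e.symm s).2 = b := le_antisymm hs.2 (hb _)
    ext
    simp [← h2]
  map_rel_iff' := Subtype.mk_le_mk.trans <| e.le_iff_le.trans <| by simp

theorem isBooleanLattice_of_orderIso_finset {P α : Type*} [PartialOrder P] [Finite α]
    (e : P ≃o Finset α) : IsBooleanLattice P :=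
  let ⟨n, ⟨f⟩⟩ := Finite.exists_equiv_fin α
  ⟨n, ⟨e.trans f.finsetCongrOrderIso⟩⟩

namespace IsBooleanLattice

variable {α β : Type*} [PartialOrder α] [PartialOrder β]

theorem of_orderIso (e : α ≃o β) (h : IsBooleanLattice β) : IsBooleanLattice α :=
  let ⟨n, ⟨f⟩⟩ := h
  ⟨n, ⟨e.trans f⟩⟩

theorem prod (hα : IsBooleanLattice α) (hβ : IsBooleanLattice β) :
    IsBooleanLattice (α × β) :=
  let ⟨_, ⟨e₁⟩⟩ := hα
  let ⟨_, ⟨e₂⟩⟩ := hβ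
  isBooleanLattice_of_orderIso_finset ((e₁.prodCongr e₂).trans Finset.sumEquiv.symm)

theorem fst (h : IsBooleanLattice (α × β)) : IsBooleanLattice α := by
  obtain ⟨n, ⟨e⟩⟩ := h
  have htop : IsTop (e.symm ⊤) := fun _ ↦ e.le_symm_apply.2 le_top
  have hbot : IsBot (e.symm ⊥) := fun _ ↦ e.symm_apply_le.2 bot_le
  exact isBooleanLattice_of_orderIso_finset
    ((e.fstOrderIsoIic htop.fst hbot.snd).trans (Finset.subtypeOrderIsoIic _).symm)

theorem snd (h : IsBooleanLattice (α × β)) : IsBooleanLattice β :=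
  (h.of_orderIso OrderIso.prodComm).fst

end IsBooleanLattice

theorem stmt_19_general {P1 P2 : Type*} [PartialOrder P1] [PartialOrder P2] :
    IsBooleanLattice (P1 × P2) ↔ IsBooleanLattice P1 ∧ IsBooleanLattice P2 :=
  ⟨fun h ↦ ⟨h.fst, h.snd⟩, fun ⟨h₁, h₂⟩ ↦ h₁.prod h₂⟩

theorem stmt_19 {P1 P2 : Type*} [PartialOrder P1] [PartialOrder P2]
    [Fintype P1] [Fintype P2] [Nonempty P1] [Nonempty P2] :
    IsBooleanLattice (P1 × P2) ↔ IsBooleanLattice P1 ∧ IsBooleanLattice P2 :=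
  stmt_19_general
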